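/- Let d ≥ 1, λ ≥ 0, K ≥ 0, and let φ : ℝ^d → ℝ be K-Lipschitz and λ-concave. Then for every ε > 0 and every t > 0 the Cole–Hopf function u^ε_t is λ/(1+λt)-concave, i.e. x ↦ u^ε_t(x) − (λ/(2(1+λt)))‖x‖² is concave on ℝ^d. -/

import Mathlib

open MeasureTheory
noncomputable section

/-- The Cole–Hopf function
`u^ε_t(x) = −ε log( (2πεt)^{−d/2} ∫ exp(−‖x−y‖²/(2εt) − φ(y)/ε) dy )`. -/
def coleHopf {d : ℕ} (φ : EuclideanSpace ℝ (Fin d) → ℝ) (ε t : ℝ)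
    (x : EuclideanSpace ℝ (Fin d)) : ℝ :=
  -ε * Real.log ((2 * Real.pi * ε * t) ^ (-(d : ℝ) / 2) *
    ∫ y : EuclideanSpace ℝ (Fin d),
      Real.exp (-‖x - y‖ ^ 2 / (2 * ε * t) - φ y / ε))

/-!
Write `s = 1 + λt` and `ψ = φ - λ/2 ‖·‖²`, which is concave. Completing the square,
`u^ε_t(x) - λ‖x‖²/(2s) = const - ε log ∫ k(x, z) dz` with
`k(x, z) = exp (-‖x - s z‖²/(2εts) - ψ(z)/ε)`. For `x = a x₀ + b x₁` the points
`z₀ = z + (b/s)(x₀ - x₁)` and `z₁ = z - (a/s)(x₀ - x₁)` satisfy `xᵢ - s zᵢ = x - s z` and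
`a z₀ + b z₁ = z`, so concavity of `ψ` gives `k(x, z) ≤ k(x₀, z₀)^a k(x₁, z₁)^b`. Hölder's
inequality with exponents `1/a, 1/b` and translation invariance of Lebesgue measure then show that
`x ↦ log ∫ k(x, z) dz` is convex.
-/

open Real Set

section Holder

theorem integral_le_rpow_mul_rpow_of_le {α : Type*} [MeasurableSpace α] {μ : Measure α}
    {f g h : α → ℝ} (hf : Integrable f μ) (hg : Integrable g μ) (hh : Integrable h μ)
    (hf₀ : 0 ≤ f) (hg₀ : 0 ≤ g) (hh₀ : 0 ≤ h) {a b : ℝ} (ha : 0 ≤ a) (hb : 0 ≤ b)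
    (hab : a + b = 1) (hle : ∀ x, h x ≤ f x ^ a * g x ^ b) :
    ∫ x, h x ∂μ ≤ (∫ x, f x ∂μ) ^ a * (∫ x, g x ∂μ) ^ b := by
  have hF : 0 ≤ ∫ x, f x ∂μ := integral_nonneg hf₀
  have hG : 0 ≤ ∫ x, g x ∂μ := integral_nonneg hg₀
  rw [← ENNReal.ofReal_le_ofReal_iff (by positivity),
    ofReal_integral_eq_lintegral_ofReal hh (ae_of_all _ hh₀), ENNReal.ofReal_mul (by positivity),
    ← ENNReal.ofReal_rpow_of_nonneg hF ha, ← ENNReal.ofReal_rpow_of_nonneg hG hb,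
    ofReal_integral_eq_lintegral_ofReal hf (ae_of_all _ hf₀),
    ofReal_integral_eq_lintegral_ofReal hg (ae_of_all _ hg₀)]
  calc ∫⁻ x, ENNReal.ofReal (h x) ∂μ
      ≤ ∫⁻ x, ENNReal.ofReal (f x) ^ a * ENNReal.ofReal (g x) ^ b ∂μ := by
        refine lintegral_mono fun x => ?_
        rw [ENNReal.ofReal_rpow_of_nonneg (hf₀ x) ha, ENNReal.ofReal_rpow_of_nonneg (hg₀ x) hb,
          ← ENNReal.ofReal_mul (rpow_nonneg (hf₀ x) a)]
        exact ENNReal.ofReal_le_ofReal (hle x)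
    _ ≤ _ := ENNReal.lintegral_mul_norm_pow_le hf.aemeasurable.ennreal_ofReal
        hg.aemeasurable.ennreal_ofReal ha hb hab

variable {G : Type*} [MeasurableSpace G] [AddGroup G] [MeasurableAdd G] {μ : Measure G}
  [μ.IsAddRightInvariant]

theorem integral_le_rpow_mul_rpow_of_le_add {f g h : G → ℝ} (hf : Integrable f μ)
    (hg : Integrable g μ) (hh : Integrable h μ) (hf₀ : 0 ≤ f) (hg₀ : 0 ≤ g) (hh₀ : 0 ≤ h)
    {a b : ℝ} (ha : 0 ≤ a) (hb : 0 ≤ b) (hab : a + b = 1) (u v : G)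
    (hle : ∀ x, h x ≤ f (x + u) ^ a * g (x + v) ^ b) :
    ∫ x, h x ∂μ ≤ (∫ x, f x ∂μ) ^ a * (∫ x, g x ∂μ) ^ b := by
  rw [← integral_add_right_eq_self f u, ← integral_add_right_eq_self g v]
  exact integral_le_rpow_mul_rpow_of_le (hf.comp_add_right u) (hg.comp_add_right v) hh
    (fun x => hf₀ (x + u)) (fun x => hg₀ (x + v)) hh₀ ha hb hab hle

theorem convexOn_log_integral_of_le_add {E : Type*} [AddCommGroup E] [Module ℝ E]
    {F : E → G → ℝ} (hF : ∀ x, Integrable (F x) μ) (hF₀ : ∀ x, 0 ≤ F x)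
    (hpos : ∀ x, 0 < ∫ y, F x y ∂μ)
    (hle : ∀ x₀ x₁ : E, ∀ a b : ℝ, 0 < a → 0 < b → a + b = 1 →
      ∃ u v : G, ∀ y, F (a • x₀ + b • x₁) y ≤ F x₀ (y + u) ^ a * F x₁ (y + v) ^ b) :
    ConvexOn ℝ univ fun x => log (∫ y, F x y ∂μ) := by
  refine convexOn_iff_forall_pos.2 ⟨convex_univ, fun x₀ _ x₁ _ a b ha hb hab => ?_⟩
  obtain ⟨u, v, huv⟩ := hle x₀ x₁ a b ha hb hab
  have h₀ := hpos x₀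
  have h₁ := hpos x₁
  calc log (∫ y, F (a • x₀ + b • x₁) y ∂μ)
      ≤ log ((∫ y, F x₀ y ∂μ) ^ a * (∫ y, F x₁ y ∂μ) ^ b) :=
        log_le_log (hpos _) (integral_le_rpow_mul_rpow_of_le_add (hF x₀) (hF x₁) (hF _)
          (hF₀ x₀) (hF₀ x₁) (hF₀ _) ha.le hb.le hab u v huv)
    _ = a * log (∫ y, F x₀ y ∂μ) + b * log (∫ y, F x₁ y ∂μ) := by
        rw [log_mul (rpow_pos_of_pos h₀ a).ne' (rpow_pos_of_pos h₁ b).ne', log_rpow h₀,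
          log_rpow h₁]

end Holder

theorem exp_sub_le_rpow_mul_rpow_of_concaveOn {E : Type*} [AddCommGroup E] [Module ℝ E]
    {ψ : E → ℝ} (hψ : ConcaveOn ℝ univ ψ) (q : E → ℝ) {s : ℝ} (hs : s ≠ 0) {a b : ℝ}
    (ha : 0 ≤ a) (hb : 0 ≤ b) (hab : a + b = 1) (x₀ x₁ y : E) :
    exp (q (a • x₀ + b • x₁ - s • y) - ψ y) ≤
      exp (q (x₀ - s • (y + (b / s) • (x₀ - x₁))) - ψ (y + (b / s) • (x₀ - x₁))) ^ a *
      exp (q (x₁ - s • (y + (-(a / s)) • (x₀ - x₁))) - ψ (y + (-(a / s)) • (x₀ - x₁))) ^ b := by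
  obtain rfl : a = 1 - b := by linarith
  set y₀ := y + (b / s) • (x₀ - x₁)
  set y₁ := y + (-((1 - b) / s)) • (x₀ - x₁)
  have hx₀ : x₀ - s • y₀ = (1 - b) • x₀ + b • x₁ - s • y := by
    rw [smul_add, smul_smul, mul_div_cancel₀ _ hs]
    module
  have hx₁ : x₁ - s • y₁ = (1 - b) • x₀ + b • x₁ - s • y := by
    rw [smul_add, smul_smul, mul_neg, mul_div_cancel₀ _ hs]
    module
  have hy : (1 - b) • y₀ + b • y₁ = y := by
    module
  have hconc := hψ.2 (mem_univ y₀) (mem_univ y₁) ha hb hab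
  rw [hy, smul_eq_mul, smul_eq_mul] at hconc
  rw [hx₀, hx₁, ← exp_mul, ← exp_mul, ← exp_add]
  exact exp_le_exp.2 (by linarith)

section ColeHopf

variable {V : Type*} [NormedAddCommGroup V] [InnerProductSpace ℝ V]

def coleHopfKernel (φ : V → ℝ) (lam ε t : ℝ) (x z : V) : ℝ :=
  exp (-‖x - (1 + lam * t) • z‖ ^ 2 / (2 * ε * t * (1 + lam * t)) -
    (φ z - lam / 2 * ‖z‖ ^ 2) / ε)

theorem coleHopfKernel_eq (φ : V → ℝ) {lam ε t : ℝ} (hε : ε ≠ 0) (ht : t ≠ 0)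
    (hs : 1 + lam * t ≠ 0) (x z : V) :
    coleHopfKernel φ lam ε t x z = exp (lam / (2 * (1 + lam * t)) * ‖x‖ ^ 2 / ε) *
      exp (-‖x - z‖ ^ 2 / (2 * ε * t) - φ z / ε) := by
  rw [coleHopfKernel, ← exp_add, norm_sub_sq_real, norm_sub_sq_real, norm_smul,
    real_inner_smul_right, norm_eq_abs, mul_pow, sq_abs]
  congr 1
  field_simp
  ring

theorem coleHopfKernel_le_rpow_mul_rpow {φ : V → ℝ} {lam ε t : ℝ}
    (hConc : ConcaveOn ℝ univ fun y => φ y - lam / 2 * ‖y‖ ^ 2) (hε : 0 ≤ ε)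
    (hs : 1 + lam * t ≠ 0) {a b : ℝ} (ha : 0 ≤ a) (hb : 0 ≤ b) (hab : a + b = 1) (x₀ x₁ y : V) :
    coleHopfKernel φ lam ε t (a • x₀ + b • x₁) y ≤
      coleHopfKernel φ lam ε t x₀ (y + (b / (1 + lam * t)) • (x₀ - x₁)) ^ a *
      coleHopfKernel φ lam ε t x₁ (y + (-(a / (1 + lam * t))) • (x₀ - x₁)) ^ b := by
  have hψ : ConcaveOn ℝ univ fun y => (φ y - lam / 2 * ‖y‖ ^ 2) / ε := by
    simpa only [div_eq_inv_mul, smul_eq_mul] using hConc.smul (inv_nonneg.2 hε)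
  exact exp_sub_le_rpow_mul_rpow_of_concaveOn hψ (fun w => -‖w‖ ^ 2 / (2 * ε * t * (1 + lam * t)))
    hs ha hb hab x₀ x₁ y

variable [FiniteDimensional ℝ V] [MeasurableSpace V] [BorelSpace V]

theorem integrable_exp_neg_mul_sq_norm_sub {β : ℝ} (hβ : 0 < β) (x : V) :
    Integrable fun y : V => exp (-β * ‖x - y‖ ^ 2) := by
  refine ((GaussianFourier.integrable_cexp_neg_mul_sq_norm_add (V := V) (b := β)
    (by simpa using hβ) 0 0).norm.comp_sub_left x).congr (ae_of_all _ fun y => ?_)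
  simp [Complex.norm_exp, ← Complex.ofReal_pow]

theorem integrable_coleHopf_integrand {φ : V → ℝ} {K : ℝ}
    (hLip : ∀ y z, |φ y - φ z| ≤ K * ‖y - z‖) {ε t : ℝ} (hε : 0 < ε) (ht : 0 < t) (x : V) :
    Integrable fun y => exp (-‖x - y‖ ^ 2 / (2 * ε * t) - φ y / ε) := by
  have hφ : Continuous φ :=
    (LipschitzWith.of_dist_le' fun y z => by simpa [dist_eq_norm] using hLip y z).continuous
  refine ((integrable_exp_neg_mul_sq_norm_sub (β := 1 / (4 * ε * t)) (by positivity) x).const_mul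
    (exp ((K ^ 2 * t - φ x) / ε))).mono' (by fun_prop) (ae_of_all _ fun y => ?_)
  rw [norm_of_nonneg (exp_pos _).le, ← exp_add, exp_le_exp, ← sub_nonneg]
  have hφy : φ x - K * ‖x - y‖ ≤ φ y := by linarith [le_abs_self (φ x - φ y), hLip x y]
  have : (K ^ 2 * t - φ x) / ε + -(1 / (4 * ε * t)) * ‖x - y‖ ^ 2 -
      (-‖x - y‖ ^ 2 / (2 * ε * t) - φ y / ε) =
      ((‖x - y‖ - 2 * K * t) ^ 2 + 4 * t * (φ y - (φ x - K * ‖x - y‖))) / (4 * ε * t) := by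
    field_simp
    ring
  rw [this]
  exact div_nonneg (by nlinarith [sq_nonneg (‖x - y‖ - 2 * K * t)]) (by positivity)

theorem integrable_coleHopfKernel {φ : V → ℝ} {K lam ε t : ℝ}
    (hLip : ∀ y z, |φ y - φ z| ≤ K * ‖y - z‖) (hε : 0 < ε) (ht : 0 < t)
    (hs : 1 + lam * t ≠ 0) (x : V) : Integrable (coleHopfKernel φ lam ε t x) := by
  simp_rw [funext (coleHopfKernel_eq φ hε.ne' ht.ne' hs x)]
  exact (integrable_coleHopf_integrand hLip hε ht x).const_mul _

end ColeHopf

theorem coleHopf_sub_eq_log_integral_coleHopfKernel {d : ℕ} {φ : EuclideanSpace ℝ (Fin d) → ℝ}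
    {K lam ε t : ℝ} (hLip : ∀ y z, |φ y - φ z| ≤ K * ‖y - z‖) (hε : 0 < ε) (ht : 0 < t)
    (hs : 1 + lam * t ≠ 0) (x : EuclideanSpace ℝ (Fin d)) :
    coleHopf φ ε t x - lam / (2 * (1 + lam * t)) * ‖x‖ ^ 2 =
      -ε * log ((2 * π * ε * t) ^ (-(d : ℝ) / 2)) -
        ε * log (∫ z, coleHopfKernel φ lam ε t x z) := by
  have hI := integral_exp_pos (integrable_coleHopf_integrand hLip hε ht x)
  have hZ : 0 < (2 * π * ε * t) ^ (-(d : ℝ) / 2) := by positivity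
  simp_rw [coleHopfKernel_eq φ hε.ne' ht.ne' hs x]
  rw [integral_const_mul, log_mul (exp_pos _).ne' hI.ne', log_exp, coleHopf,
    log_mul hZ.ne' hI.ne']
  field_simp
  ring

theorem stmt1_general (d : ℕ) (lam K : ℝ) (hlam : 0 ≤ lam)
    (φ : EuclideanSpace ℝ (Fin d) → ℝ)
    (hLip : ∀ y z, |φ y - φ z| ≤ K * ‖y - z‖)
    (hConc : ConcaveOn ℝ Set.univ (fun y => φ y - lam / 2 * ‖y‖ ^ 2))
    (ε : ℝ) (hε : 0 < ε) (t : ℝ) (ht : 0 < t) :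
    ConcaveOn ℝ Set.univ
      (fun x => coleHopf φ ε t x - lam / (2 * (1 + lam * t)) * ‖x‖ ^ 2) := by
  have hs : 1 + lam * t ≠ 0 := by positivity
  have hlogConvex : ConvexOn ℝ univ fun x => log (∫ z, coleHopfKernel φ lam ε t x z) :=
    convexOn_log_integral_of_le_add (integrable_coleHopfKernel hLip hε ht hs)
      (fun x z => (exp_pos _).le)
      (fun x => integral_exp_pos (integrable_coleHopfKernel hLip hε ht hs x))
      fun x₀ x₁ a b ha hb hab =>
        ⟨_, _, coleHopfKernel_le_rpow_mul_rpow hConc hε.le hs ha.le hb.le hab x₀ x₁⟩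
  simp_rw [coleHopf_sub_eq_log_integral_coleHopfKernel hLip hε ht hs]
  exact (concaveOn_const _ convex_univ).sub (hlogConvex.smul hε.le)

theorem stmt1 (d : ℕ) (hd : 1 ≤ d) (lam K : ℝ) (hlam : 0 ≤ lam) (hK : 0 ≤ K)
    (φ : EuclideanSpace ℝ (Fin d) → ℝ)
    (hLip : ∀ y z, |φ y - φ z| ≤ K * ‖y - z‖)
    (hConc : ConcaveOn ℝ Set.univ (fun y => φ y - lam / 2 * ‖y‖ ^ 2))
    (ε : ℝ) (hε : 0 < ε) (t : ℝ) (ht : 0 < t) :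
    ConcaveOn ℝ Set.univ
      (fun x => coleHopf φ ε t x - lam / (2 * (1 + lam * t)) * ‖x‖ ^ 2) :=
  stmt1_general d lam K hlam φ hLip hConc ε hε t ht
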